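/- arXiv:2307.10682 — 7 statements merged into one kernel-verified Lean document; each statement's English description precedes it below -/
import Mathlib

section
/- Let Λ be a numerical semigroup with elements λ_0 = 0 < λ_1 < λ_2 < ⋯, conductor c = λ_L, and let λ_s be a right primitive element of Λ (so s ≥ L). Set Λ̃ = Λ ∖ {λ_s}. Then for every i < L, any order-i seed λ_t of Λ with t > s is also an order-i seed of Λ̃ (old-order recycled seeds). -/
/-- A numerical semigroup: a cofinite additive submonoid of ℕ. -/
structure NumericalSemigroup where
  carrier : Set ℕ
  zero_mem : 0 ∈ carrier
  add_mem : ∀ a b : ℕ, a ∈ carrier → b ∈ carrier → a + b ∈ carrier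
  cofinite : (carrierᶜ : Set ℕ).Finite

namespace NumericalSemigroup

/-- The genus: the number of gaps (elements of ℕ not in the semigroup). -/
noncomputable def genus (Λ : NumericalSemigroup) : ℕ := Λ.carrierᶜ.ncard

/-- The conductor: the least `c` such that every `n ≥ c` belongs to the semigroup
(equivalently, one plus the largest gap). -/
noncomputable def conductor (Λ : NumericalSemigroup) : ℕ := sInf {c | ∀ n, c ≤ n → n ∈ Λ.carrier}

/-- The multiplicity: the smallest nonzero element. -/
noncomputable def multiplicity (Λ : NumericalSemigroup) : ℕ := sInf {x | x ∈ Λ.carrier ∧ x ≠ 0}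

/-- The increasing enumeration `λ_0 = 0 < λ_1 < λ_2 < ⋯` of the elements. -/
noncomputable def el (Λ : NumericalSemigroup) (i : ℕ) : ℕ := Nat.nth (fun n => n ∈ Λ.carrier) i

/-- `L`: the number of elements smaller than the conductor (the left elements). -/
noncomputable def leftCount (Λ : NumericalSemigroup) : ℕ := {x ∈ Λ.carrier | x < Λ.conductor}.ncard

/-- A primitive element (minimal generator): a nonzero element that is not a sum of
two nonzero elements of the semigroup. -/
noncomputable def IsPrimitive (Λ : NumericalSemigroup) (x : ℕ) : Prop :=
  x ∈ Λ.carrier ∧ x ≠ 0 ∧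
    ¬ ∃ a b : ℕ, a ∈ Λ.carrier ∧ b ∈ Λ.carrier ∧ a ≠ 0 ∧ b ≠ 0 ∧ a + b = x

/-- The set of primitive elements. -/
noncomputable def primitives (Λ : NumericalSemigroup) : Set ℕ := {x | Λ.IsPrimitive x}

/-- A right primitive element: a primitive element ≥ the conductor. -/
noncomputable def IsRightPrimitive (Λ : NumericalSemigroup) (x : ℕ) : Prop :=
  Λ.IsPrimitive x ∧ Λ.conductor ≤ x

/-- An element `x = λ_s ≥ c` is an order-`i` seed when
`λ_s + λ_i ≠ λ_j + λ_k` for all `i < j ≤ k < s`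
(the condition `k < s` is expressed as `λ_k < x`). -/
noncomputable def IsSeed (Λ : NumericalSemigroup) (i x : ℕ) : Prop :=
  x ∈ Λ.carrier ∧ Λ.conductor ≤ x ∧
    ∀ j k : ℕ, i < j → j ≤ k → Λ.el k < x → x + Λ.el i ≠ Λ.el j + Λ.el k

/-- `q = ⌈c/m⌉`. -/
noncomputable def q (Λ : NumericalSemigroup) : ℕ :=
  (Λ.conductor + Λ.multiplicity - 1) / Λ.multiplicity

/-- `ρ = q·m − c`. -/
noncomputable def rho (Λ : NumericalSemigroup) : ℕ := Λ.q * Λ.multiplicity - Λ.conductor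

/-- The Eliahou constant
`E(Λ) = #(P ∩ {x < c})·L − q·(m − #(P ∩ {x ≥ c})) + ρ`. -/
noncomputable def eliahou (Λ : NumericalSemigroup) : ℤ :=
  ({x ∈ Λ.primitives | x < Λ.conductor}.ncard : ℤ) * (Λ.leftCount : ℤ)
    - (Λ.q : ℤ) * ((Λ.multiplicity : ℤ) - ({x ∈ Λ.primitives | Λ.conductor ≤ x}.ncard : ℤ))
    + (Λ.rho : ℤ)

/-- `Λ = ⟨a,b,c⟩|_κ`: `Λ` is the smallest numerical semigroup containing
`a`, `b`, `c` and every integer `≥ κ`. -/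
noncomputable def IsSmallestContaining (Λ : NumericalSemigroup) (a b c κ : ℕ) : Prop :=
  a ∈ Λ.carrier ∧ b ∈ Λ.carrier ∧ c ∈ Λ.carrier ∧ (∀ n, κ ≤ n → n ∈ Λ.carrier) ∧
    ∀ M : NumericalSemigroup,
      a ∈ M.carrier → b ∈ M.carrier → c ∈ M.carrier → (∀ n, κ ≤ n → n ∈ M.carrier) →
        Λ.carrier ⊆ M.carrier

end NumericalSemigroup

/-- Old-order recycled seeds: for `i < L`, any order-`i` seed `λ_t` of `Λ` with `t > s`
is also an order-`i` seed of `Λ̃ = Λ \ {λ_s}`. -/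
theorem oldOrderRecycledSeeds
    (Λ : NumericalSemigroup) (s : ℕ) (hs : Λ.IsRightPrimitive (Λ.el s))
    (M : NumericalSemigroup) (hM : M.carrier = Λ.carrier \ {Λ.el s})
    (i t : ℕ) (hi : i < Λ.leftCount) (ht : s < t)
    (hseed : Λ.IsSeed i (Λ.el t)) :
    M.IsSeed i (Λ.el t) := by
  classical
  have hΛinf : {n | n ∈ Λ.carrier}.Infinite := by
    have h := Λ.cofinite.infinite_compl
    rwa [compl_compl] at h
  have hMinf : {n | n ∈ M.carrier}.Infinite := by
    have h := M.cofinite.infinite_compl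
    rwa [compl_compl] at h
  have hmem : ∀ n, Λ.el n ∈ Λ.carrier := fun n => Nat.nth_mem_of_infinite hΛinf n
  have hel_lt : ∀ {a b : ℕ}, a < b → Λ.el a < Λ.el b := fun h =>
    (Nat.nth_lt_nth hΛinf).2 h
  have hΛcond : ∀ n, Λ.conductor ≤ n → n ∈ Λ.carrier := by
    have hne : {c | ∀ n, c ≤ n → n ∈ Λ.carrier}.Nonempty := by
      obtain ⟨N, hN⟩ := Λ.cofinite.bddAbove
      refine ⟨N + 1, fun n hn => ?_⟩
      by_contra h
      exact absurd (hN h) (by omega)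
    exact Nat.sInf_mem hne
  have hscond : Λ.conductor ≤ Λ.el s := hs.2
  -- count relations
  have hcount_eq : ∀ x, x ≤ Λ.el s →
      Nat.count (fun n => n ∈ M.carrier) x = Nat.count (fun n => n ∈ Λ.carrier) x := by
    intro x hx
    rw [Nat.count_eq_card_filter_range, Nat.count_eq_card_filter_range]
    congr 1
    apply Finset.filter_congr
    intro n hn
    simp only [Finset.mem_range] at hn
    simp only [hM, Set.mem_diff, Set.mem_singleton_iff, eq_iff_iff]
    constructor
    · exact fun h => h.1
    · exact fun h => ⟨h, by omega⟩
  have hcount_gt : ∀ x, Λ.el s < x →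
      Nat.count (fun n => n ∈ M.carrier) x + 1 = Nat.count (fun n => n ∈ Λ.carrier) x := by
    intro x hx
    rw [Nat.count_eq_card_filter_range, Nat.count_eq_card_filter_range]
    have hins : (Finset.range x).filter (fun n => n ∈ Λ.carrier)
        = insert (Λ.el s) ((Finset.range x).filter (fun n => n ∈ M.carrier)) := by
      ext n
      simp only [Finset.mem_filter, Finset.mem_range, Finset.mem_insert, hM, Set.mem_diff,
        Set.mem_singleton_iff]
      constructor
      · rintro ⟨hn, hc⟩
        by_cases hns : n = Λ.el s
        · exact Or.inl hns
        · exact Or.inr ⟨hn, hc, hns⟩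
      · rintro (rfl | ⟨hn, hc, _⟩)
        · exact ⟨hx, hmem s⟩
        · exact ⟨hn, hc⟩
    rw [hins, Finset.card_insert_of_notMem (by
      simp [hM, Set.mem_diff, Set.mem_singleton_iff])]
  have hMel_lt : ∀ n, n < s → M.el n = Λ.el n := by
    intro n hn
    have h1 : Λ.el n ∈ M.carrier := by
      rw [hM]
      exact ⟨hmem n, (hel_lt hn).ne⟩
    have h2 := Nat.nth_count (p := fun m => m ∈ M.carrier) h1
    have hc : Nat.count (fun m => m ∈ Λ.carrier) (Λ.el n) = n :=
      Nat.count_nth_of_infinite hΛinf n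
    rw [hcount_eq _ (hel_lt hn).le, hc] at h2
    exact h2
  have hMel_ge : ∀ n, s ≤ n → M.el n = Λ.el (n + 1) := by
    intro n hn
    have hgt : Λ.el s < Λ.el (n + 1) := hel_lt (by omega)
    have h1 : Λ.el (n + 1) ∈ M.carrier := by
      rw [hM]
      exact ⟨hmem _, hgt.ne'⟩
    have h2 := Nat.nth_count (p := fun m => m ∈ M.carrier) h1
    have h3 := hcount_gt _ hgt
    have hc : Nat.count (fun m => m ∈ Λ.carrier) (Λ.el (n + 1)) = n + 1 :=
      Nat.count_nth_of_infinite hΛinf (n + 1)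
    rw [hc] at h3
    have h4 : Nat.count (fun m => m ∈ M.carrier) (Λ.el (n + 1)) = n := by omega
    rw [h4] at h2
    exact h2
  -- leftCount ≤ s
  have hLs : Λ.leftCount ≤ s := by
    have hset : {x ∈ Λ.carrier | x < Λ.conductor}
        = ↑((Finset.range Λ.conductor).filter (fun n => n ∈ Λ.carrier)) := by
      ext n
      simp only [Set.mem_setOf_eq, Finset.coe_filter, Finset.mem_range]
      tauto
    have : Λ.leftCount = Nat.count (fun n => n ∈ Λ.carrier) Λ.conductor := by
      rw [NumericalSemigroup.leftCount, hset, Set.ncard_coe_finset,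
        Nat.count_eq_card_filter_range]
    rw [this]
    calc Nat.count (fun n => n ∈ Λ.carrier) Λ.conductor
        ≤ Nat.count (fun n => n ∈ Λ.carrier) (Λ.el s) := Nat.count_monotone _ hscond
      _ = s := Nat.count_nth_of_infinite hΛinf s
  obtain ⟨hcar, hcon, hmain⟩ := hseed
  have hst : Λ.el s < Λ.el t := hel_lt ht
  refine ⟨?_, ?_, ?_⟩
  · rw [hM]
    exact ⟨hcar, hst.ne'⟩
  · have hMc : M.conductor ≤ Λ.el s + 1 := by
      apply Nat.sInf_le
      intro n hn
      rw [hM]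
      refine ⟨hΛcond n (by omega), by simp only [Set.mem_singleton_iff]; omega⟩
    omega
  · intro j k hij hjk hkx
    have his : i < s := lt_of_lt_of_le hi hLs
    rw [hMel_lt i his]
    by_cases hjs : j < s
    · by_cases hks : k < s
      · rw [hMel_lt j hjs, hMel_lt k hks]
        rw [hMel_lt k hks] at hkx
        exact hmain j k hij hjk hkx
      · rw [hMel_lt j hjs, hMel_ge k (by omega)]
        rw [hMel_ge k (by omega)] at hkx
        exact hmain j (k + 1) hij (by omega) hkx
    · rw [hMel_ge j (by omega), hMel_ge k (by omega)]
      rw [hMel_ge k (by omega)] at hkx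
      exact hmain (j + 1) (k + 1) (by omega) (by omega) hkx
end

section
/- Let Λ be a numerical semigroup with elements λ_0 = 0 < λ_1 < λ_2 < ⋯, conductor c = λ_L, and let λ_s be a right primitive element of Λ (so s ≥ L). Set Λ̃ = Λ ∖ {λ_s}. Suppose i < L − 1 and λ_t > λ_s is an element of Λ that is not an order-i seed of Λ. Then λ_t is an order-i seed of Λ̃ if and only if λ_t = λ_s + λ_{i+1} − λ_i and λ_s is an order-(i+1) seed of Λ. -/
namespace NumericalSemigroup

lemma inf_carrier (Λ : NumericalSemigroup) : {n | n ∈ Λ.carrier}.Infinite := by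
  have h := Λ.cofinite.infinite_compl
  simpa using h

lemma el_mem' (Λ : NumericalSemigroup) (i : ℕ) : Λ.el i ∈ Λ.carrier :=
  Nat.nth_mem_of_infinite Λ.inf_carrier i

lemma el_strictMono' (Λ : NumericalSemigroup) : StrictMono Λ.el :=
  Nat.nth_strictMono Λ.inf_carrier

lemma el_lt_el' (Λ : NumericalSemigroup) {j k : ℕ} : Λ.el j < Λ.el k ↔ j < k :=
  Nat.nth_lt_nth Λ.inf_carrier

lemma el_le_el' (Λ : NumericalSemigroup) {j k : ℕ} : Λ.el j ≤ Λ.el k ↔ j ≤ k :=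
  Nat.nth_le_nth Λ.inf_carrier

lemma exists_el (Λ : NumericalSemigroup) {x : ℕ} (hx : x ∈ Λ.carrier) :
    ∃ j, Λ.el j = x := by
  classical
  exact ⟨Nat.count (fun n => n ∈ Λ.carrier) x, Nat.nth_count hx⟩

lemma conductor_mem' (Λ : NumericalSemigroup) : ∀ n, Λ.conductor ≤ n → n ∈ Λ.carrier := by
  have hne : {c | ∀ n, c ≤ n → n ∈ Λ.carrier}.Nonempty := by
    obtain ⟨b, hb⟩ := Λ.cofinite.bddAbove
    refine ⟨b + 1, fun n hn => ?_⟩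
    by_contra hc
    exact absurd (hb hc) (by omega)
  exact Nat.sInf_mem hne

/-- Value form of the seed condition. -/
lemma isSeed_iff' (Λ : NumericalSemigroup) (i x : ℕ) :
    Λ.IsSeed i x ↔ x ∈ Λ.carrier ∧ Λ.conductor ≤ x ∧
      ∀ a b : ℕ, a ∈ Λ.carrier → b ∈ Λ.carrier → Λ.el i < a → a ≤ b → b < x →
        x + Λ.el i ≠ a + b := by
  unfold IsSeed
  refine and_congr_right fun _ => and_congr_right fun _ => ⟨?_, ?_⟩
  · intro h a b ha hb hia hab hbx
    obtain ⟨j, rfl⟩ := Λ.exists_el ha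
    obtain ⟨k, rfl⟩ := Λ.exists_el hb
    exact h j k (Λ.el_lt_el'.1 hia) (Λ.el_le_el'.1 hab) hbx
  · intro h j k hij hjk hk
    exact h _ _ (Λ.el_mem' j) (Λ.el_mem' k) (Λ.el_lt_el'.2 hij) (Λ.el_le_el'.2 hjk) hk

lemma el_lt_conductor' (Λ : NumericalSemigroup) {j : ℕ} (h : j < Λ.leftCount) :
    Λ.el j < Λ.conductor := by
  by_contra hle
  push_neg at hle
  have hsub : {x ∈ Λ.carrier | x < Λ.conductor} ⊆ Λ.el '' Set.Iio j := by
    rintro x ⟨hx1, hx2⟩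
    obtain ⟨k, rfl⟩ := Λ.exists_el hx1
    exact ⟨k, Λ.el_lt_el'.1 (lt_of_lt_of_le hx2 hle), rfl⟩
  have hfin : (Λ.el '' Set.Iio j).Finite := (Set.finite_Iio j).image _
  have h1 := Set.ncard_le_ncard hsub hfin
  have h2 : (Λ.el '' Set.Iio j).ncard ≤ (Set.Iio j).ncard :=
    Set.ncard_image_le (Set.finite_Iio j)
  have h3 : (Set.Iio j).ncard = j := by
    simp [Set.ncard_eq_toFinset_card']
  unfold leftCount at h
  omega

/-- a ∈ Λ with λ_i < a implies λ_{i+1} ≤ a. -/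
lemma el_succ_le (Λ : NumericalSemigroup) {i a : ℕ} (ha : a ∈ Λ.carrier)
    (h : Λ.el i < a) : Λ.el (i + 1) ≤ a := by
  obtain ⟨k, rfl⟩ := Λ.exists_el ha
  exact Λ.el_le_el'.2 (Λ.el_lt_el'.1 h)


end NumericalSemigroup

/-- Old-order new seeds, case `i < L - 1`: an element `λ_t > λ_s` of `Λ` which is not an
order-`i` seed of `Λ` is an order-`i` seed of `Λ̃ = Λ \ {λ_s}` if and only if
`λ_t = λ_s + λ_{i+1} - λ_i` and `λ_s` is an order-`(i+1)` seed of `Λ`. -/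
theorem oldOrderNewSeeds_of_lt_pred_leftCount
    (Λ : NumericalSemigroup) (s : ℕ) (hs : Λ.IsRightPrimitive (Λ.el s))
    (M : NumericalSemigroup) (hM : M.carrier = Λ.carrier \ {Λ.el s})
    (i t : ℕ) (hi : i + 1 < Λ.leftCount) (ht : Λ.el s < Λ.el t)
    (hnot : ¬ Λ.IsSeed i (Λ.el t)) :
    M.IsSeed i (Λ.el t) ↔
      (Λ.el t = Λ.el s + (Λ.el (i + 1) - Λ.el i) ∧ Λ.IsSeed (i + 1) (Λ.el s)) := by
  classical
  -- Basic facts about Λ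
  have hinf := Λ.inf_carrier
  have hcs : Λ.conductor ≤ Λ.el s := hs.2
  have hi1c : Λ.el (i + 1) < Λ.conductor := Λ.el_lt_conductor' hi
  have hii1 : Λ.el i < Λ.el (i + 1) := Λ.el_strictMono' (by omega)
  have hi1s : Λ.el (i + 1) < Λ.el s := lt_of_lt_of_le hi1c hcs
  have his : Λ.el i < Λ.el s := hii1.trans hi1s
  have htmem : Λ.el t ∈ Λ.carrier := Λ.el_mem' t
  have hsmem : Λ.el s ∈ Λ.carrier := Λ.el_mem' s
  have hMsub : ∀ x, x ∈ M.carrier → x ∈ Λ.carrier ∧ x ≠ Λ.el s := by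
    intro x hx; rw [hM] at hx; exact hx
  have hMmem : ∀ x, x ∈ Λ.carrier → x ≠ Λ.el s → x ∈ M.carrier := by
    intro x hx hne; rw [hM]; exact ⟨hx, hne⟩
  have htM : Λ.el t ∈ M.carrier := hMmem _ htmem (by omega)
  have hMcond : M.conductor ≤ Λ.el s + 1 := by
    apply Nat.sInf_le
    intro n hn
    exact hMmem _ (Λ.conductor_mem' n (by omega)) (by omega)
  have hMct : M.conductor ≤ Λ.el t := by omega
  -- M.el i = Λ.el i
  have hMeli : M.el i = Λ.el i := by
    have hiM : Λ.el i ∈ M.carrier := hMmem _ (Λ.el_mem' i) (by omega)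
    have hcount : Nat.count (fun n => n ∈ M.carrier) (Λ.el i)
        = Nat.count (fun n => n ∈ Λ.carrier) (Λ.el i) := by
      rw [Nat.count_eq_card_filter_range, Nat.count_eq_card_filter_range]
      congr 1
      apply Finset.filter_congr
      intro n hn
      simp only [Finset.mem_range] at hn
      have : n ≠ Λ.el s := by omega
      simp [hM, this]
    have hcΛ : Nat.count (fun n => n ∈ Λ.carrier) (Λ.el i) = i :=
      Nat.count_nth_of_infinite hinf i
    have := Nat.nth_count (p := fun n => n ∈ M.carrier) hiM
    rw [hcount, hcΛ] at this
    exact this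
  -- value form of non-seed for Λ
  have hnot' := hnot
  rw [Λ.isSeed_iff'] at hnot'
  push_neg at hnot'
  obtain ⟨a, b, ha, hb, hia, hab, hbt, heq⟩ := hnot' htmem (by omega)
  constructor
  · intro hMseed
    rw [M.isSeed_iff'] at hMseed
    obtain ⟨-, -, hMseed⟩ := hMseed
    rw [hMeli] at hMseed
    -- λ_s ∈ {a, b}
    have hsab : a = Λ.el s ∨ b = Λ.el s := by
      by_contra hc
      push_neg at hc
      exact hMseed a b (hMmem _ ha hc.1) (hMmem _ hb hc.2) hia hab hbt heq
    have hbs : Λ.el s ≤ b := by rcases hsab with h | h <;> omega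
    have ha1 : Λ.el (i + 1) ≤ a := Λ.el_succ_le ha hia
    rcases eq_or_lt_of_le ha1 with hA | hA
    · -- a = λ_{i+1}, hence b = λ_s
      have hbeq : b = Λ.el s := by
        rcases hsab with h | h
        · omega
        · exact h
      have heq2 : Λ.el t + Λ.el i = Λ.el s + Λ.el (i + 1) := by omega
      refine ⟨by omega, ?_⟩
      rw [Λ.isSeed_iff']
      refine ⟨hsmem, hcs, ?_⟩
      intro a' b' ha' hb' hia' hab' hbs' heq'
      have ha's : a' ≠ Λ.el s := by omega
      have hb's : b' ≠ Λ.el s := by omega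
      exact hMseed a' b' (hMmem _ ha' ha's) (hMmem _ hb' hb's) (by omega) hab'
        (by omega) (by omega)
    · -- a > λ_{i+1}: contradiction
      exfalso
      set b'' := a + b - Λ.el (i + 1) with hb''
      have hb''s : Λ.el s < b'' := by omega
      have hb''mem : b'' ∈ Λ.carrier := Λ.conductor_mem' b'' (by omega)
      exact hMseed (Λ.el (i + 1)) b''
        (hMmem _ (Λ.el_mem' (i + 1)) (by omega))
        (hMmem _ hb''mem (by omega))
        hii1 (by omega) (by omega) (by omega)
  · rintro ⟨hteq, hseedS⟩
    have heq2 : Λ.el t + Λ.el i = Λ.el s + Λ.el (i + 1) := by omega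
    rw [Λ.isSeed_iff'] at hseedS
    obtain ⟨-, -, hseedS⟩ := hseedS
    rw [M.isSeed_iff', hMeli]
    refine ⟨htM, hMct, ?_⟩
    intro a' b' ha' hb' hia' hab' hbt' heq'
    obtain ⟨ha'Λ, ha's⟩ := hMsub _ ha'
    obtain ⟨hb'Λ, hb's⟩ := hMsub _ hb'
    have ha'1 : Λ.el (i + 1) ≤ a' := Λ.el_succ_le ha'Λ hia'
    have hb'lt : b' < Λ.el s := by omega
    have ha'gt : Λ.el (i + 1) < a' := by omega
    exact hseedS a' b' ha'Λ hb'Λ ha'gt hab' hb'lt (by omega)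
end

section
/- Let Λ be a numerical semigroup with elements λ_0 = 0 < λ_1 < λ_2 < ⋯ and conductor c = λ_L, and suppose λ_s = c is a right primitive element of Λ. Set Λ̃ = Λ ∖ {λ_s}. Then an element λ_t > λ_s of Λ that is not an order-(L−1) seed of Λ is an order-(L−1) seed of Λ̃ if and only if λ_t = λ_s + λ_L − λ_{L−1} or λ_t = λ_s + λ_L − λ_{L−1} + 1. -/
open Nat in
/-- Old-order new seeds, case `i = L - 1` and `λ_s = c`: an element `λ_t > λ_s` of `Λ`
which is not an order-`(L-1)` seed of `Λ` is an order-`(L-1)` seed of `Λ̃ = Λ \ {λ_s}`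
if and only if `λ_t = λ_s + λ_L - λ_{L-1}` or `λ_t = λ_s + λ_L - λ_{L-1} + 1`. -/
theorem oldOrderNewSeeds_of_eq_conductor
    (Λ : NumericalSemigroup) (s : ℕ) (hs : Λ.IsRightPrimitive (Λ.el s))
    (hc : Λ.el s = Λ.conductor)
    (M : NumericalSemigroup) (hM : M.carrier = Λ.carrier \ {Λ.el s})
    (t : ℕ) (ht : Λ.el s < Λ.el t)
    (hnot : ¬ Λ.IsSeed (Λ.leftCount - 1) (Λ.el t)) :
    M.IsSeed (Λ.leftCount - 1) (Λ.el t) ↔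
      (Λ.el t = Λ.el s + (Λ.el Λ.leftCount - Λ.el (Λ.leftCount - 1)) ∨
       Λ.el t = Λ.el s + (Λ.el Λ.leftCount - Λ.el (Λ.leftCount - 1)) + 1) := by
  classical
  set p : ℕ → Prop := fun n => n ∈ Λ.carrier with hp
  set pM : ℕ → Prop := fun n => n ∈ M.carrier with hpMdef
  set c := Λ.conductor with hcdef
  set L := Λ.leftCount with hLdef
  have hΛinf : (setOf p).Infinite := Set.infinite_of_finite_compl Λ.cofinite
  have hMinf : (setOf pM).Infinite := Set.infinite_of_finite_compl M.cofinite
  -- the conductor property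
  have hne : {κ | ∀ n, κ ≤ n → n ∈ Λ.carrier}.Nonempty := by
    obtain ⟨N, hN⟩ := Λ.cofinite.bddAbove
    refine ⟨N + 1, fun n hn => ?_⟩
    by_contra h
    exact absurd (hN (show n ∈ Λ.carrierᶜ from h)) (by omega)
  have hconv : ∀ n, c ≤ n → n ∈ Λ.carrier := Nat.sInf_mem hne
  -- `L = count p c`
  have hLc : Nat.count p c = L := by
    rw [Nat.count_eq_card_filter_range, hLdef, NumericalSemigroup.leftCount]
    rw [show {x ∈ Λ.carrier | x < Λ.conductor} =
        ↑({x ∈ Finset.range c | p x}) by ext x; simp [hp, hcdef, and_comm]]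
    rw [Set.ncard_coe_finset]
  -- `c ≥ 1`
  have hc1 : 1 ≤ c := by
    rcases Nat.eq_zero_or_pos c with h0 | h
    · exact absurd (hc.trans h0) hs.1.2.1
    · exact h
  -- `L ≥ 1`
  have hL1 : 1 ≤ L := by
    have : Nat.count p 1 ≤ Nat.count p c := Nat.count_monotone p hc1
    rw [Nat.count_one, if_pos (show p 0 from Λ.zero_mem), hLc] at this
    exact this
  -- count above the conductor
  have hcount : ∀ a, Nat.count p (c + a) = L + a := by
    intro a
    induction a with
    | zero => simpa using hLc
    | succ a ih =>
      rw [show c + (a+1) = (c+a) + 1 by ring, Nat.count_succ, ih,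
        if_pos (show p (c+a) from hconv _ (by omega))]
      omega
  have hel : ∀ a, Λ.el (L + a) = c + a := by
    intro a
    have := Nat.nth_count (p := p) (show p (c + a) from hconv _ (by omega))
    rwa [hcount a] at this
  have helL : Λ.el L = c := by simpa using hel 0
  -- `s = L`
  have hsL : s = L := Nat.nth_injective hΛinf (by rw [show Nat.nth p s = Λ.el s from rfl, hc, ← helL]; rfl)
  have hels : Λ.el s = c := hc
  -- `λ_{L-1} < c`
  have helm : Λ.el (L - 1) < c := by
    have : Λ.el (L - 1) < Λ.el L := (Nat.nth_lt_nth hΛinf).2 (by omega)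
    omega
  set x := Λ.el t with hxdef
  have hxc : c < x := by rw [← hels]; exact ht
  have hxmem : x ∈ Λ.carrier := Nat.nth_mem_of_infinite hΛinf t
  -- unpack `hnot`
  have hlow : 2 * c ≤ x + Λ.el (L - 1) := by
    rw [NumericalSemigroup.IsSeed] at hnot
    push_neg at hnot
    obtain ⟨j, k, hj, hjk, hk, heq⟩ := hnot hxmem (le_of_lt hxc)
    have hjL : L ≤ j := by omega
    have h1 : c ≤ Λ.el j := by rw [← helL]; exact Nat.nth_monotone hΛinf hjL
    have h2 : Λ.el j ≤ Λ.el k := Nat.nth_monotone hΛinf hjk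
    omega
  -- counts for `M` agree with those of `Λ` below `c`
  have hpM : ∀ n, pM n ↔ (p n ∧ n ≠ c) := by
    intro n
    simp [hpMdef, hp, hM, hels]
  have hcagree : ∀ n, n ≤ c → Nat.count pM n = Nat.count p n := by
    intro n hn
    induction n with
    | zero => simp
    | succ n ih =>
      rw [Nat.count_succ, Nat.count_succ, ih (by omega)]
      congr 1
      have : pM n ↔ p n := by rw [hpM]; constructor <;> intro h <;> simp_all <;> omega
      simp [this]
  -- `el_M (L-1) = el (L-1)`
  have helM1 : Nat.nth pM (L - 1) = Λ.el (L - 1) := by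
    have hmem : p (Λ.el (L - 1)) := Nat.nth_mem_of_infinite hΛinf _
    have hmemM : pM (Λ.el (L - 1)) := (hpM _).2 ⟨hmem, by omega⟩
    have h2 : Nat.count p (Λ.el (L - 1)) = L - 1 := Nat.count_nth_of_infinite hΛinf (L - 1)
    have := Nat.nth_count hmemM
    rwa [hcagree _ (by omega), h2] at this
  -- counts of `M` above the conductor
  have hcountM : ∀ a, Nat.count pM (c + 1 + a) = L + a := by
    intro a
    induction a with
    | zero =>
      rw [show c + 1 + 0 = c + 1 by ring, Nat.count_succ, hcagree c le_rfl, hLc,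
        if_neg (by rw [hpM]; simp)]
    | succ a ih =>
      rw [show c + 1 + (a+1) = (c + 1 + a) + 1 by ring, Nat.count_succ, ih,
        if_pos ((hpM _).2 ⟨hconv _ (by omega), by omega⟩)]
      omega
  have helM : ∀ a, Nat.nth pM (L + a) = c + 1 + a := by
    intro a
    have := Nat.nth_count (p := pM) ((hpM _).2 ⟨hconv (c + 1 + a) (by omega), by omega⟩)
    rwa [hcountM a] at this
  -- `M.conductor ≤ c + 1`
  have hMc : M.conductor ≤ c + 1 := by
    apply Nat.sInf_le
    intro n hn
    rw [hM]
    exact ⟨hconv n (by omega), by simp [hels]; omega⟩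
  have hMel : ∀ i, M.el i = Nat.nth pM i := fun i => rfl
  constructor
  · rintro ⟨-, -, hall⟩
    have hup : x + Λ.el (L - 1) ≤ 2 * c + 1 := by
      by_contra hcon
      push_neg at hcon
      set n := x + Λ.el (L - 1) - (2 * c + 2) with hndef
      set a := n / 2 with hadef
      set b := n - n / 2 with hbdef
      have hble : b ≤ x - c - 2 := by omega
      have := hall (L + a) (L + b) (by omega) (by omega)
        (by rw [hMel, helM]; omega)
      rw [hMel, hMel, hMel, helM, helM, helM1] at this
      omega
    rw [helL, hels]
    omega
  · intro h
    have hxle : x + Λ.el (L - 1) ≤ 2 * c + 1 := by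
      rw [helL, hels] at h; omega
    refine ⟨?_, ?_, ?_⟩
    · rw [hM]
      exact ⟨hxmem, by simp [hels]; omega⟩
    · omega
    · intro j k hj hjk hk heq
      have hjL : L ≤ j := by omega
      have h1 : c + 1 ≤ M.el j := by
        rw [hMel]
        have h0 : Nat.nth pM L = c + 1 := by simpa using helM 0
        have : Nat.nth pM L ≤ Nat.nth pM j := Nat.nth_monotone hMinf hjL
        omega
      have h2 : M.el j ≤ M.el k := Nat.nth_monotone hMinf hjk
      rw [show M.el (L - 1) = Λ.el (L - 1) from helM1] at heq
      omega
end

section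
/- Let Λ be a numerical semigroup with elements λ_0 = 0 < λ_1 < λ_2 < ⋯, conductor c = λ_L, and let λ_s be a right primitive element of Λ with s − 2 ≥ L. Set Λ̃ = Λ ∖ {λ_s}. Then the unique order-(s−2) seed of Λ̃ is λ_s + 1. -/
open Classical in
/-- Everything at or above the conductor is in the semigroup. -/
lemma NumericalSemigroup.conductor_spec (Λ : NumericalSemigroup) :
    ∀ n, Λ.conductor ≤ n → n ∈ Λ.carrier := by
  have hne : {c | ∀ n, c ≤ n → n ∈ Λ.carrier}.Nonempty := by
    obtain ⟨N, hN⟩ := Λ.cofinite.bddAbove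
    refine ⟨N + 1, fun n hn => ?_⟩
    by_contra h
    have := hN h
    omega
  exact Nat.sInf_mem hne

lemma NumericalSemigroup.setOf_infinite (Λ : NumericalSemigroup) :
    {n | n ∈ Λ.carrier}.Infinite := by
  have h := Set.Finite.infinite_compl Λ.cofinite
  rwa [compl_compl] at h

open Classical in
lemma NumericalSemigroup.leftCount_eq_count (Λ : NumericalSemigroup) :
    Λ.leftCount = Nat.count (fun n => n ∈ Λ.carrier) Λ.conductor := by
  rw [Nat.count_eq_card_filter_range, NumericalSemigroup.leftCount,
    ← Set.ncard_coe_finset]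
  congr 1
  ext z
  simp only [Set.mem_setOf_eq, Finset.coe_filter, Finset.mem_range]
  tauto

/-- New-order seeds, case `i = s - 2`: the unique order-`(s-2)` seed of
`Λ̃ = Λ \ {λ_s}` is `λ_s + 1`. -/
theorem newOrderSeeds_of_eq_sub_two
    (Λ : NumericalSemigroup) (s : ℕ) (hs : Λ.IsRightPrimitive (Λ.el s))
    (hL : Λ.leftCount ≤ s - 2) (hs2 : 2 ≤ s)
    (M : NumericalSemigroup) (hM : M.carrier = Λ.carrier \ {Λ.el s}) :
    ∀ x : ℕ, M.IsSeed (s - 2) x ↔ x = Λ.el s + 1 := by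
  classical
  set p : ℕ → Prop := fun n => n ∈ Λ.carrier with hp
  set q : ℕ → Prop := fun n => n ∈ M.carrier with hq
  have hpi : {n | p n}.Infinite := Λ.setOf_infinite
  have hqi : {n | q n}.Infinite := M.setOf_infinite
  set t := s - 2 with htdef
  have ht2 : s = t + 2 := by omega
  -- λ_L = conductor
  have hcmem : p Λ.conductor := Λ.conductor_spec _ le_rfl
  have helL : Λ.el Λ.leftCount = Λ.conductor := by
    rw [NumericalSemigroup.el, Λ.leftCount_eq_count, Nat.nth_count hcmem]
  -- conductor ≤ λ_t
  have hcel : Λ.conductor ≤ Λ.el t := by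
    rw [← helL]
    exact (Nat.nth_le_nth hpi).2 hL
  -- consecutive elements above the conductor
  have hsucc : ∀ i, Λ.conductor ≤ Λ.el i → Λ.el (i + 1) = Λ.el i + 1 := by
    intro i hi
    have h1 : p (Λ.el i + 1) := Λ.conductor_spec _ (by omega)
    have h2 : Nat.count p (Λ.el i + 1) = i + 1 :=
      Nat.count_nth_succ_of_infinite hpi i
    have h3 := Nat.nth_count h1
    rw [h2] at h3
    exact h3
  have e1 : Λ.el (t + 1) = Λ.el t + 1 := hsucc t hcel
  have e2 : Λ.el (t + 2) = Λ.el t + 2 := by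
    rw [hsucc (t + 1) (by omega), e1]
  have hes : Λ.el s = Λ.el t + 2 := by rw [ht2, e2]
  -- counts of Λ and M agree below λ_s
  have hcount_eq : ∀ y : ℕ, y ≤ Λ.el s → Nat.count q y = Nat.count p y := by
    intro y
    induction y with
    | zero => intro _; simp
    | succ n ih =>
      intro hy
      have hiff : q n ↔ p n := by
        simp only [hq, hp, hM, Set.mem_diff, Set.mem_singleton_iff]
        constructor
        · tauto
        · intro h; exact ⟨h, by omega⟩
      rw [Nat.count_succ, Nat.count_succ, ih (by omega)]
      by_cases h : p n
      · rw [if_pos h, if_pos (hiff.2 h)]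
      · rw [if_neg h, if_neg (fun hh => h (hiff.1 hh))]
  -- M.el agrees with Λ.el below s
  have hMel : ∀ i, i < s → M.el i = Λ.el i := by
    intro i hi
    have hlt : Λ.el i < Λ.el s := (Nat.nth_lt_nth hpi).2 hi
    have hpm : p (Λ.el i) := Nat.nth_mem_of_infinite hpi i
    have hqm : q (Λ.el i) := by
      simp only [hq, hM, Set.mem_diff, Set.mem_singleton_iff]
      exact ⟨hpm, by omega⟩
    have hcq : Nat.count q (Λ.el i) = i := by
      rw [hcount_eq _ hlt.le]
      exact Nat.count_nth_of_infinite hpi i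
    have h3 := Nat.nth_count hqm
    rw [hcq] at h3
    exact h3
  -- M.el s = λ_s + 1
  have hqs1 : q (Λ.el s + 1) := by
    simp only [hq, hM, Set.mem_diff, Set.mem_singleton_iff]
    exact ⟨Λ.conductor_spec _ (le_trans hs.2 (by omega)), by omega⟩
  have hqsnot : ¬ q (Λ.el s) := by
    simp only [hq, hM, Set.mem_diff, Set.mem_singleton_iff]
    tauto
  have hMels : M.el s = Λ.el s + 1 := by
    have hcs : Nat.count p (Λ.el s) = s := Nat.count_nth_of_infinite hpi s
    have hcq : Nat.count q (Λ.el s + 1) = s := by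
      rw [Nat.count_succ, if_neg hqsnot, hcount_eq _ le_rfl, hcs, add_zero]
    have h3 := Nat.nth_count hqs1
    rw [hcq] at h3
    exact h3
  -- conductor of M = λ_s + 1
  have hMcond : M.conductor = Λ.el s + 1 := by
    have hmem : (Λ.el s + 1) ∈ {c | ∀ n, c ≤ n → n ∈ M.carrier} := by
      intro n hn
      rw [hM]
      exact ⟨Λ.conductor_spec _ (le_trans hs.2 (by omega)), by
        simp only [Set.mem_singleton_iff]; omega⟩
    have hle : M.conductor ≤ Λ.el s + 1 := Nat.sInf_le hmem
    have hmem2 : M.conductor ∈ {c | ∀ n, c ≤ n → n ∈ M.carrier} :=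
      Nat.sInf_mem ⟨_, hmem⟩
    have hgt : Λ.el s < M.conductor := by
      by_contra h
      have : Λ.el s ∈ M.carrier := hmem2 _ (by omega)
      rw [hM] at this
      exact this.2 rfl
    omega
  have hMelt : M.el t = Λ.el t := hMel t (by omega)
  have hMelt1 : M.el (t + 1) = Λ.el t + 1 := by rw [hMel (t + 1) (by omega), e1]
  intro x
  constructor
  · rintro ⟨hxmem, hxc, hseed⟩
    rw [hMcond] at hxc
    by_contra hne
    have hxgt : Λ.el s + 2 ≤ x := by omega
    -- take k with M.el k = x - 1
    have hqx1 : q (x - 1) := by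
      rw [hq, hM]
      refine ⟨Λ.conductor_spec _ (le_trans hs.2 (by omega)), ?_⟩
      simp only [Set.mem_singleton_iff]; omega
    set k := Nat.count q (x - 1) with hk
    have hMelk : M.el k = x - 1 := Nat.nth_count hqx1
    have hjk : t + 1 ≤ k := by
      by_contra h
      have : M.el k ≤ M.el (t + 1) := (Nat.nth_le_nth hqi).2 (by omega)
      rw [hMelk, hMelt1] at this
      omega
    have := hseed (t + 1) k (by omega) hjk (by omega) -- M.el k = x-1 < x
    rw [hMelt, hMelt1, hMelk] at this
    omega
  · rintro rfl
    refine ⟨?_, by rw [hMcond], ?_⟩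
    · rw [hM]
      exact ⟨Λ.conductor_spec _ (le_trans hs.2 (by omega)), by
        simp only [Set.mem_singleton_iff]; omega⟩
    · intro j k hj hjk hk
      -- M.el k < λ_s + 1 forces k < s, hence j = k = t + 1
      have hks : k < s := by
        by_contra h
        have : M.el s ≤ M.el k := (Nat.nth_le_nth hqi).2 (by omega)
        rw [hMels] at this
        omega
      have hj1 : j = t + 1 := by omega
      have hk1 : k = t + 1 := by omega
      subst hj1; subst hk1
      rw [hMelt, hMelt1]
      omega
end

section
/- Let Λ = {0, 19, 29, 31, 38, 48, 50, 57, 58, 60, 62, 67, 69} ∪ {n ∈ ℕ : n ≥ 76}. Then Λ is a numerical semigroup with genus g = 63, conductor c = 76, multiplicity m = 19, exactly p = 12 primitive elements of which r = 9 are right primitive elements, L = 13 elements smaller than the conductor, q = ⌈c/m⌉ = 4, ρ = qm − c = 0, and the Eliahou constant of Λ is negative. -/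
section Aux

open NumericalSemigroup

/-- The carrier set. -/
def Aset : Set ℕ :=
  ({0, 19, 29, 31, 38, 48, 50, 57, 58, 60, 62, 67, 69} : Set ℕ) ∪ {n : ℕ | 76 ≤ n}

lemma mem_Aset (n : ℕ) : n ∈ Aset ↔
    (n = 0 ∨ n = 19 ∨ n = 29 ∨ n = 31 ∨ n = 38 ∨ n = 48 ∨ n = 50 ∨ n = 57 ∨ n = 58 ∨
      n = 60 ∨ n = 62 ∨ n = 67 ∨ n = 69 ∨ 76 ≤ n) := by
  simp [Aset, Set.mem_union, Set.mem_insert_iff, Set.mem_setOf_eq]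
  tauto

lemma Aset_conductor (Λ : NumericalSemigroup) (hΛ : Λ.carrier = Aset) :
    Λ.conductor = 76 := by
  have h76 : (76 : ℕ) ∈ {c | ∀ n, c ≤ n → n ∈ Λ.carrier} := by
    intro n hn; rw [hΛ, mem_Aset]; omega
  refine le_antisymm (Nat.sInf_le h76) (le_csInf ⟨76, h76⟩ ?_)
  intro c hc
  by_contra h
  push_neg at h
  have h75 := hc 75 (by omega)
  rw [hΛ, mem_Aset] at h75
  omega

lemma Aset_primitives (Λ : NumericalSemigroup) (hΛ : Λ.carrier = Aset) :
    Λ.primitives = ↑({19, 29, 31, 78, 80, 82, 83, 84, 85, 90, 92, 94} : Finset ℕ) := by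
  ext x
  simp only [Finset.coe_insert, Set.mem_insert_iff, Finset.coe_singleton,
    Set.mem_singleton_iff]
  constructor
  · rintro ⟨hx, hx0, hns⟩
    have w : ∀ a b : ℕ,
        (a = 0 ∨ a = 19 ∨ a = 29 ∨ a = 31 ∨ a = 38 ∨ a = 48 ∨ a = 50 ∨ a = 57 ∨ a = 58 ∨
          a = 60 ∨ a = 62 ∨ a = 67 ∨ a = 69 ∨ 76 ≤ a) →
        (b = 0 ∨ b = 19 ∨ b = 29 ∨ b = 31 ∨ b = 38 ∨ b = 48 ∨ b = 50 ∨ b = 57 ∨ b = 58 ∨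
          b = 60 ∨ b = 62 ∨ b = 67 ∨ b = 69 ∨ 76 ≤ b) →
        a ≠ 0 → b ≠ 0 → a + b = x → False := by
      intro a b ha hb h1 h2 h3
      exact hns ⟨a, b, by rw [hΛ, mem_Aset]; exact ha, by rw [hΛ, mem_Aset]; exact hb,
        h1, h2, h3⟩
    rw [hΛ, mem_Aset] at hx
    by_cases hbig : 95 ≤ x
    · exact (w 19 (x - 19) (by omega) (by omega) (by omega) (by omega) (by omega)).elim
    · rcases hx with h|h|h|h|h|h|h|h|h|h|h|h|h|h
      · omega
      · omega
      · omega
      · omega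
      · exact (w 19 19 (by omega) (by omega) (by omega) (by omega) (by omega)).elim
      · exact (w 19 29 (by omega) (by omega) (by omega) (by omega) (by omega)).elim
      · exact (w 19 31 (by omega) (by omega) (by omega) (by omega) (by omega)).elim
      · exact (w 19 38 (by omega) (by omega) (by omega) (by omega) (by omega)).elim
      · exact (w 29 29 (by omega) (by omega) (by omega) (by omega) (by omega)).elim
      · exact (w 29 31 (by omega) (by omega) (by omega) (by omega) (by omega)).elim
      · exact (w 31 31 (by omega) (by omega) (by omega) (by omega) (by omega)).elim
      · exact (w 19 48 (by omega) (by omega) (by omega) (by omega) (by omega)).elim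
      · exact (w 19 50 (by omega) (by omega) (by omega) (by omega) (by omega)).elim
      · -- 76 ≤ x ≤ 94
        interval_cases x
        · exact (w 19 57 (by omega) (by omega) (by omega) (by omega) (by omega)).elim
        · exact (w 19 58 (by omega) (by omega) (by omega) (by omega) (by omega)).elim
        · omega
        · exact (w 19 60 (by omega) (by omega) (by omega) (by omega) (by omega)).elim
        · omega
        · exact (w 19 62 (by omega) (by omega) (by omega) (by omega) (by omega)).elim
        · omega
        · omega
        · omega
        · omega
        · exact (w 19 67 (by omega) (by omega) (by omega) (by omega) (by omega)).elim
        · exact (w 29 58 (by omega) (by omega) (by omega) (by omega) (by omega)).elim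
        · exact (w 19 69 (by omega) (by omega) (by omega) (by omega) (by omega)).elim
        · exact (w 29 60 (by omega) (by omega) (by omega) (by omega) (by omega)).elim
        · omega
        · exact (w 29 62 (by omega) (by omega) (by omega) (by omega) (by omega)).elim
        · omega
        · exact (w 31 62 (by omega) (by omega) (by omega) (by omega) (by omega)).elim
        · omega
  · intro hx
    refine ⟨by rw [hΛ, mem_Aset]; omega, by omega, ?_⟩
    rintro ⟨a, b, ha, hb, ha0, hb0, hab⟩
    rw [hΛ, mem_Aset] at ha hb
    omega

end Aux

/-- The parameters of the Eliahou semigroup `⟨19,29,31⟩|_76`. -/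
theorem parameters_19_29_31 :
    (∃ Λ : NumericalSemigroup,
      Λ.carrier = ({0, 19, 29, 31, 38, 48, 50, 57, 58, 60, 62, 67, 69} : Set ℕ) ∪ {n : ℕ | 76 ≤ n}) ∧
    (∀ Λ : NumericalSemigroup,
      Λ.carrier = ({0, 19, 29, 31, 38, 48, 50, 57, 58, 60, 62, 67, 69} : Set ℕ) ∪ {n : ℕ | 76 ≤ n} →
      Λ.genus = 63 ∧ Λ.conductor = 76 ∧ Λ.multiplicity = 19 ∧
      Λ.primitives.ncard = 12 ∧
      {x ∈ Λ.primitives | Λ.conductor ≤ x}.ncard = 9 ∧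
      Λ.leftCount = 13 ∧ Λ.q = 4 ∧ Λ.rho = 0 ∧ Λ.eliahou < 0) := by
  constructor
  · refine ⟨⟨Aset, by rw [mem_Aset]; omega, ?_, ?_⟩, rfl⟩
    · intro a b ha hb
      rw [mem_Aset] at *
      omega
    · apply Set.Finite.subset (Set.finite_Iio 76)
      intro n hn
      simp only [Set.mem_compl_iff, mem_Aset] at hn
      simp only [Set.mem_Iio]
      omega
  · intro Λ hΛ'
    have hΛ : Λ.carrier = Aset := hΛ'
    have hc : Λ.conductor = 76 := Aset_conductor Λ hΛ
    have hm : Λ.multiplicity = 19 := by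
      unfold NumericalSemigroup.multiplicity
      have h19 : (19 : ℕ) ∈ {x | x ∈ Λ.carrier ∧ x ≠ 0} := by
        refine ⟨by rw [hΛ, mem_Aset]; omega, by omega⟩
      refine le_antisymm (Nat.sInf_le h19) (le_csInf ⟨19, h19⟩ ?_)
      rintro x ⟨hx, hx0⟩
      rw [hΛ, mem_Aset] at hx
      omega
    have hP := Aset_primitives Λ hΛ
    have hg : Λ.genus = 63 := by
      unfold NumericalSemigroup.genus
      have : Λ.carrierᶜ = ↑((Finset.range 76).filter
          (fun n => n ∉ ({0, 19, 29, 31, 38, 48, 50, 57, 58, 60, 62, 67, 69} : Finset ℕ))) := by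
        ext n
        simp only [Set.mem_compl_iff, hΛ, mem_Aset, Finset.coe_filter, Finset.mem_range,
          Finset.mem_insert, Finset.mem_singleton, Set.mem_setOf_eq]
        omega
      rw [this, Set.ncard_coe_finset]
      decide
    have hL : Λ.leftCount = 13 := by
      unfold NumericalSemigroup.leftCount
      have : {x ∈ Λ.carrier | x < Λ.conductor} =
          ↑({0, 19, 29, 31, 38, 48, 50, 57, 58, 60, 62, 67, 69} : Finset ℕ) := by
        ext n
        simp only [Set.mem_setOf_eq, hΛ, mem_Aset, hc, Finset.coe_insert, Set.mem_insert_iff,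
          Finset.coe_singleton, Set.mem_singleton_iff]
        omega
      rw [this, Set.ncard_coe_finset]
      decide
    have hp : Λ.primitives.ncard = 12 := by
      rw [hP, Set.ncard_coe_finset]; decide
    have hr : {x ∈ Λ.primitives | Λ.conductor ≤ x}.ncard = 9 := by
      have : {x ∈ Λ.primitives | Λ.conductor ≤ x} =
          ↑({78, 80, 82, 83, 84, 85, 90, 92, 94} : Finset ℕ) := by
        ext n
        simp only [Set.mem_setOf_eq, hP, hc, Finset.coe_insert, Set.mem_insert_iff,
          Finset.coe_singleton, Set.mem_singleton_iff]
        omega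
      rw [this, Set.ncard_coe_finset]
      decide
    have hl : {x ∈ Λ.primitives | x < Λ.conductor}.ncard = 3 := by
      have : {x ∈ Λ.primitives | x < Λ.conductor} = ↑({19, 29, 31} : Finset ℕ) := by
        ext n
        simp only [Set.mem_setOf_eq, hP, hc, Finset.coe_insert, Set.mem_insert_iff,
          Finset.coe_singleton, Set.mem_singleton_iff]
        omega
      rw [this, Set.ncard_coe_finset]
      decide
    have hq : Λ.q = 4 := by
      unfold NumericalSemigroup.q
      rw [hc, hm]
    have hrho : Λ.rho = 0 := by
      unfold NumericalSemigroup.rho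
      rw [hq, hc, hm]
    refine ⟨hg, hc, hm, hp, hr, hL, hq, hrho, ?_⟩
    unfold NumericalSemigroup.eliahou
    rw [hl, hr, hL, hq, hm, hrho]
    norm_num
end

section
/- Let Λ = {0, 19, 30, 31, 38, 49, 50, 57, 60, 61, 62, 68, 69} ∪ {n ∈ ℕ : n ≥ 76}. Then Λ is a numerical semigroup with genus g = 63, conductor c = 76, multiplicity m = 19, exactly p = 12 primitive elements of which r = 9 are right primitive elements, L = 13 elements smaller than the conductor, q = ⌈c/m⌉ = 4, ρ = qm − c = 0, and the Eliahou constant of Λ is negative. -/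
namespace Elia1930

/-- decidable membership predicate for the semigroup -/
def Q (n : ℕ) : Prop :=
  76 ≤ n ∨ n ∈ [0, 19, 30, 31, 38, 49, 50, 57, 60, 61, 62, 68, 69]

instance : DecidablePred Q := fun n => by unfold Q; infer_instance

lemma setEq :
    ({0, 19, 30, 31, 38, 49, 50, 57, 60, 61, 62, 68, 69} : Set ℕ) ∪ {n : ℕ | 76 ≤ n}
      = {n : ℕ | Q n} := by
  ext n
  simp [Q, Set.mem_insert_iff, List.mem_cons]
  tauto

set_option maxRecDepth 10000 in
lemma addQ : ∀ a b : ℕ, Q a → Q b → Q (a + b) := by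
  have h : ∀ a < 76, ∀ b < 76, Q a → Q b → Q (a + b) := by decide
  intro a b ha hb
  by_cases h76 : 76 ≤ a + b
  · exact Or.inl h76
  · exact h a (by omega) b (by omega) ha hb

/-- nonzero small elements -/
def Fnz : Finset ℕ := {19, 30, 31, 38, 49, 50, 57, 60, 61, 62, 68, 69}

lemma Fnz_Q : ∀ a ∈ Fnz, Q a ∧ a ≠ 0 := by decide

lemma mem_Fnz_of : ∀ a : ℕ, a < 76 → Q a → a ≠ 0 → a ∈ Fnz := by decide

/-- primitive elements as a finset -/
def PrF : Finset ℕ :=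
  (Finset.range 95).filter
    (fun x => Q x ∧ x ≠ 0 ∧ ¬ ∃ a ∈ Fnz, a < x ∧ Q (x - a))

end Elia1930

/-- The parameters of the Eliahou semigroup `⟨19,30,31⟩|_76`. -/
theorem parameters_19_30_31 :
    (∃ Λ : NumericalSemigroup,
      Λ.carrier = ({0, 19, 30, 31, 38, 49, 50, 57, 60, 61, 62, 68, 69} : Set ℕ) ∪ {n : ℕ | 76 ≤ n}) ∧
    (∀ Λ : NumericalSemigroup,
      Λ.carrier = ({0, 19, 30, 31, 38, 49, 50, 57, 60, 61, 62, 68, 69} : Set ℕ) ∪ {n : ℕ | 76 ≤ n} →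
      Λ.genus = 63 ∧ Λ.conductor = 76 ∧ Λ.multiplicity = 19 ∧
      Λ.primitives.ncard = 12 ∧
      {x ∈ Λ.primitives | Λ.conductor ≤ x}.ncard = 9 ∧
      Λ.leftCount = 13 ∧ Λ.q = 4 ∧ Λ.rho = 0 ∧ Λ.eliahou < 0) := by
  -- the carrier set
  set S : Set ℕ := ({0, 19, 30, 31, 38, 49, 50, 57, 60, 61, 62, 68, 69} : Set ℕ) ∪ {n : ℕ | 76 ≤ n}
    with hS
  have hSQ : S = {n : ℕ | Elia1930.Q n} := Elia1930.setEq
  have hmemS : ∀ n, n ∈ S ↔ Elia1930.Q n := by intro n; rw [hSQ]; rfl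
  constructor
  · refine ⟨⟨S, ?_, ?_, ?_⟩, rfl⟩
    · rw [hmemS]; decide
    · intro a b ha hb
      rw [hmemS] at *
      exact Elia1930.addQ a b ha hb
    · apply Set.Finite.subset (Set.finite_Iio 76)
      intro n hn
      simp only [Set.mem_compl_iff, hmemS] at hn
      simp only [Set.mem_Iio]
      by_contra h
      exact hn (Or.inl (by omega))
  · intro Λ hcar
    have hmem : ∀ n, n ∈ Λ.carrier ↔ Elia1930.Q n := by
      intro n; rw [hcar]; exact hmemS n
    have h75 : ¬ Elia1930.Q 75 := by decide
    -- conductor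
    have hc : Λ.conductor = 76 := by
      unfold NumericalSemigroup.conductor
      have hmemc : (76:ℕ) ∈ {c | ∀ n, c ≤ n → n ∈ Λ.carrier} :=
        fun n hn => (hmem n).2 (Or.inl hn)
      apply le_antisymm (Nat.sInf_le hmemc)
      apply le_csInf ⟨76, hmemc⟩
      intro c hcset
      by_contra h
      have : (75 : ℕ) ∈ Λ.carrier := hcset 75 (by omega)
      rw [hmem] at this
      exact h75 this
    -- multiplicity
    have hm : Λ.multiplicity = 19 := by
      unfold NumericalSemigroup.multiplicity
      have h19 : (19:ℕ) ∈ {x | x ∈ Λ.carrier ∧ x ≠ 0} :=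
        ⟨(hmem 19).2 (by decide), by decide⟩
      have hsmall : ∀ x < 19, ¬ (Elia1930.Q x ∧ x ≠ 0) := by decide
      apply le_antisymm (Nat.sInf_le h19)
      apply le_csInf ⟨19, h19⟩
      rintro x ⟨hx, hx0⟩
      rw [hmem] at hx
      by_contra h
      exact hsmall x (by omega) ⟨hx, hx0⟩
    -- genus
    have hgen : Λ.genus = 63 := by
      have : Λ.carrierᶜ = ↑((Finset.range 76).filter (fun n => ¬ Elia1930.Q n)) := by
        ext n
        simp only [Set.mem_compl_iff, hmem, Finset.coe_filter, Finset.mem_range,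
          Set.mem_setOf_eq]
        constructor
        · intro h
          refine ⟨?_, h⟩
          by_contra h76
          exact h (Or.inl (by omega))
        · exact fun h => h.2
      unfold NumericalSemigroup.genus
      rw [this, Set.ncard_coe_finset]
      decide
    -- primitives
    have hprim : Λ.primitives = ↑Elia1930.PrF := by
      ext x
      simp only [NumericalSemigroup.primitives, Set.mem_setOf_eq, Finset.mem_coe,
        Elia1930.PrF, Finset.mem_filter, Finset.mem_range]
      constructor
      · rintro ⟨hx, hx0, hns⟩
        rw [hmem] at hx
        have hx95 : x < 95 := by
          by_contra h
          apply hns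
          refine ⟨19, x - 19, (hmem 19).2 (by decide), (hmem (x-19)).2 (Or.inl (by omega)),
            by decide, by omega, by omega⟩
        refine ⟨hx95, hx, hx0, ?_⟩
        rintro ⟨a, haF, hax, hQxa⟩
        obtain ⟨hQa, ha0⟩ := Elia1930.Fnz_Q a haF
        exact hns ⟨a, x - a, (hmem a).2 hQa, (hmem (x-a)).2 hQxa, ha0, by omega, by omega⟩
      · rintro ⟨hx95, hQx, hx0, hne⟩
        refine ⟨(hmem x).2 hQx, hx0, ?_⟩
        rintro ⟨a, b, ha, hb, ha0, hb0, hab⟩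
        rw [hmem] at ha hb
        rcases le_total a b with hle | hle
        · have haF : a ∈ Elia1930.Fnz := Elia1930.mem_Fnz_of a (by omega) ha ha0
          exact hne ⟨a, haF, by omega, by rw [show x - a = b by omega]; exact hb⟩
        · have hbF : b ∈ Elia1930.Fnz := Elia1930.mem_Fnz_of b (by omega) hb hb0
          exact hne ⟨b, hbF, by omega, by rw [show x - b = a by omega]; exact ha⟩
    have hpc : Λ.primitives.ncard = 12 := by
      rw [hprim, Set.ncard_coe_finset]; decide
    have hrc : {x ∈ Λ.primitives | Λ.conductor ≤ x}.ncard = 9 := by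
      have : {x ∈ Λ.primitives | Λ.conductor ≤ x}
          = ↑(Elia1930.PrF.filter (fun x => 76 ≤ x)) := by
        rw [hprim, hc]
        ext y
        simp [Finset.mem_filter]
      rw [this, Set.ncard_coe_finset]; decide
    have hlc2 : {x ∈ Λ.primitives | x < Λ.conductor}.ncard = 3 := by
      have : {x ∈ Λ.primitives | x < Λ.conductor}
          = ↑(Elia1930.PrF.filter (fun x => x < 76)) := by
        rw [hprim, hc]
        ext y
        simp [Finset.mem_filter]
      rw [this, Set.ncard_coe_finset]; decide
    -- left count
    have hL : Λ.leftCount = 13 := by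
      unfold NumericalSemigroup.leftCount
      have : {x ∈ Λ.carrier | x < Λ.conductor}
          = ↑((Finset.range 76).filter (fun n => Elia1930.Q n)) := by
        rw [hc]
        ext y
        simp [hmem, Finset.mem_filter, Finset.mem_range, and_comm]
      rw [this, Set.ncard_coe_finset]; decide
    have hq : Λ.q = 4 := by
      unfold NumericalSemigroup.q
      rw [hc, hm]
    have hrho : Λ.rho = 0 := by
      unfold NumericalSemigroup.rho
      rw [hq, hm, hc]
    refine ⟨hgen, hc, hm, hpc, hrc, hL, hq, hrho, ?_⟩
    unfold NumericalSemigroup.eliahou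
    rw [hrc, hlc2, hL, hq, hm, hrho]
    norm_num
end

section
/- For every even positive integer p and all nonnegative integers τ, i, j, the numerical semigroup ⟨19,29,31⟩|_76 is not equal to Delgado's semigroup S^{(i,j)}(p, τ); indeed the two largest of its three generators, 29 and 31, do not differ by one, while S^{(i,j)}(p, τ) is generated (together with all integers ≥ c^{(i,j)}) by three elements m^{(i,j)}, g^{(i,j)}, g^{(i,j)}+1 of which the two largest are consecutive. -/
/-- Delgado's parameter `m^{(i,j)} = p²/4 + p(τ/2 + 2) + 2 + jp/2`
(all divisions are exact since `p` is even). -/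
def delgadoM (p τ _i j : ℕ) : ℕ := p ^ 2 / 4 + p * τ / 2 + 2 * p + 2 + j * p / 2

/-- Delgado's parameter `g^{(i,j)} = p²/2 + p(τ + 7/2) − τ + j(p−1) + i·m^{(i,j)}`. -/
def delgadoG (p τ i j : ℕ) : ℕ :=
  p ^ 2 / 2 + p * τ + 7 * p / 2 + j * (p - 1) + i * delgadoM p τ i j - τ

/-- Delgado's parameter
`c^{(i,j)} = p³/4 + p²(τ/2 + 2) + 2p − τ + jp²/2 + i(p/2 + 1)·m^{(i,j)}`. -/
def delgadoC (p τ i j : ℕ) : ℕ :=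
  p ^ 3 / 4 + p ^ 2 * τ / 2 + 2 * p ^ 2 + 2 * p + j * p ^ 2 / 2
    + i * (p / 2 + 1) * delgadoM p τ i j - τ

/-- The set generated by `x, y, z` together with all integers `≥ κ`. -/
def genCarrier (x y z κ : ℕ) : Set ℕ :=
  {n | (∃ a b d : ℕ, n = a * x + b * y + d * z) ∨ κ ≤ n}

/-- `genCarrier` as a numerical semigroup. -/
def genSemigroup (x y z κ : ℕ) : NumericalSemigroup where
  carrier := genCarrier x y z κ
  zero_mem := Or.inl ⟨0, 0, 0, by ring⟩
  add_mem := by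
    rintro a b (⟨a1, b1, d1, rfl⟩ | ha) hb2
    · rcases hb2 with ⟨a2, b2, d2, rfl⟩ | hb
      · exact Or.inl ⟨a1 + a2, b1 + b2, d1 + d2, by ring⟩
      · exact Or.inr (by omega)
    · exact Or.inr (by omega)
  cofinite := by
    apply Set.Finite.subset (Set.finite_Iio κ)
    intro n hn
    simp only [Set.mem_compl_iff, genCarrier, Set.mem_setOf_eq, not_or, not_le] at hn
    exact hn.2

/-- Any semigroup that is smallest containing the generators is contained in the
generated set. -/
lemma mem_genCarrier {Λ : NumericalSemigroup} {x y z κ : ℕ}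
    (h : Λ.IsSmallestContaining x y z κ) {w : ℕ} (hw : w ∈ Λ.carrier) :
    (∃ a b d : ℕ, w = a * x + b * y + d * z) ∨ κ ≤ w := by
  have := h.2.2.2.2 (genSemigroup x y z κ)
    (Or.inl ⟨1, 0, 0, by ring⟩) (Or.inl ⟨0, 1, 0, by ring⟩)
    (Or.inl ⟨0, 0, 1, by ring⟩) (fun n hn => Or.inr hn)
  exact this hw

lemma delgadoM_eq (r τ i j : ℕ) :
    delgadoM (2 * (r + 1)) τ i j = r * r + r * τ + j * r + 6 * r + τ + j + 7 := by
  unfold delgadoM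
  have e1 : (2 * (r + 1)) ^ 2 / 4 = r * r + 2 * r + 1 := by
    rw [show (2 * (r + 1)) ^ 2 = (r * r + 2 * r + 1) * 4 by ring]
    exact Nat.mul_div_cancel _ (by norm_num)
  have e2 : 2 * (r + 1) * τ / 2 = (r + 1) * τ := by
    rw [show 2 * (r + 1) * τ = (r + 1) * τ * 2 by ring]
    exact Nat.mul_div_cancel _ (by norm_num)
  have e3 : j * (2 * (r + 1)) / 2 = j * (r + 1) := by
    rw [show j * (2 * (r + 1)) = j * (r + 1) * 2 by ring]
    exact Nat.mul_div_cancel _ (by norm_num)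
  rw [e1, e2, e3]; ring

lemma delgadoG_eq (r τ i j : ℕ) :
    delgadoG (2 * (r + 1)) τ i j + τ =
      2 * (r * r) + 2 * (r * τ) + 2 * (j * r) + 11 * r + 2 * τ + j + 9
        + i * delgadoM (2 * (r + 1)) τ i j := by
  unfold delgadoG
  have e1 : (2 * (r + 1)) ^ 2 / 2 = 2 * (r * r) + 4 * r + 2 := by
    rw [show (2 * (r + 1)) ^ 2 = (2 * (r * r) + 4 * r + 2) * 2 by ring]
    exact Nat.mul_div_cancel _ (by norm_num)
  have e2 : 7 * (2 * (r + 1)) / 2 = 7 * (r + 1) := by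
    rw [show 7 * (2 * (r + 1)) = 7 * (r + 1) * 2 by ring]
    exact Nat.mul_div_cancel _ (by norm_num)
  rw [e1, e2]
  have hτ : τ ≤ 2 * (r * r) + 4 * r + 2 + 2 * (r + 1) * τ + 7 * (r + 1)
      + j * (2 * (r + 1) - 1) + i * delgadoM (2 * (r + 1)) τ i j := by
    have h1 : τ ≤ 2 * (r + 1) * τ := Nat.le_mul_of_pos_left τ (by omega)
    have h2 : (0:ℕ) ≤ 2 * (r * r) := Nat.zero_le _
    have h3 : (0:ℕ) ≤ j * (2 * (r + 1) - 1) := Nat.zero_le _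
    have h4 : (0:ℕ) ≤ i * delgadoM (2 * (r + 1)) τ i j := Nat.zero_le _
    linarith
  rw [Nat.sub_add_cancel hτ]
  have e3 : 2 * (r + 1) - 1 = 2 * r + 1 := by omega
  rw [e3]; ring

lemma delgadoC_eq (r τ i j : ℕ) :
    delgadoC (2 * (r + 1)) τ i j + τ =
      2 * (r * r * r) + 2 * (r * r * τ) + 14 * (r * r) + 2 * (j * (r * r))
        + 4 * (r * τ) + 4 * (j * r) + 26 * r + 2 * τ + 2 * j + 14
        + i * (r + 2) * delgadoM (2 * (r + 1)) τ i j := by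
  unfold delgadoC
  have e1 : (2 * (r + 1)) ^ 3 / 4 = 2 * (r * r * r) + 6 * (r * r) + 6 * r + 2 := by
    rw [show (2 * (r + 1)) ^ 3 = (2 * (r * r * r) + 6 * (r * r) + 6 * r + 2) * 4 by ring]
    exact Nat.mul_div_cancel _ (by norm_num)
  have e2 : (2 * (r + 1)) ^ 2 * τ / 2 = 2 * ((r + 1) * (r + 1)) * τ := by
    rw [show (2 * (r + 1)) ^ 2 * τ = 2 * ((r + 1) * (r + 1)) * τ * 2 by ring]
    exact Nat.mul_div_cancel _ (by norm_num)
  have e3 : j * (2 * (r + 1)) ^ 2 / 2 = j * (2 * ((r + 1) * (r + 1))) := by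
    rw [show j * (2 * (r + 1)) ^ 2 = j * (2 * ((r + 1) * (r + 1))) * 2 by ring]
    exact Nat.mul_div_cancel _ (by norm_num)
  have e4 : 2 * (r + 1) / 2 = r + 1 := by omega
  rw [e1, e2, e3, e4]
  have hτ : τ ≤ 2 * (r * r * r) + 6 * (r * r) + 6 * r + 2 + 2 * ((r + 1) * (r + 1)) * τ
      + 2 * (2 * (r + 1)) ^ 2 + 2 * (2 * (r + 1)) + j * (2 * ((r + 1) * (r + 1)))
      + i * (r + 1 + 1) * delgadoM (2 * (r + 1)) τ i j := by
    have h1 : τ ≤ 2 * ((r + 1) * (r + 1)) * τ := Nat.le_mul_of_pos_left τ (by positivity)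
    exact h1.trans ((Nat.le_add_left _ _).trans ((Nat.le_add_right _ _).trans
      ((Nat.le_add_right _ _).trans ((Nat.le_add_right _ _).trans (Nat.le_add_right _ _)))))
  rw [Nat.sub_add_cancel hτ]
  ring

/-- The semigroup `⟨19,29,31⟩|_76` does not belong to Delgado's family
`S^{(i,j)}(p, τ)`; indeed its two largest generators 29 and 31 are not consecutive,
while the two largest generators `g^{(i,j)}` and `g^{(i,j)} + 1` of any member of
the family are consecutive. -/
theorem not_in_delgado_family_19_29_31 :
    29 + 1 ≠ 31 ∧
    (∀ p τ i j : ℕ, 0 < p → Even p →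
      ∀ Λ M : NumericalSemigroup,
        Λ.IsSmallestContaining 19 29 31 76 →
        M.IsSmallestContaining (delgadoM p τ i j) (delgadoG p τ i j)
          (delgadoG p τ i j + 1) (delgadoC p τ i j) →
        Λ.carrier ≠ M.carrier) := by
  constructor
  · norm_num
  intro p τ i j hp hev Λ M hΛ hM heq
  obtain ⟨r, rfl⟩ : ∃ r, p = 2 * (r + 1) := by
    obtain ⟨s, hs⟩ := hev
    exact ⟨s - 1, by omega⟩
  have hm := delgadoM_eq r τ i j
  have hg := delgadoG_eq r τ i j
  have hc := delgadoC_eq r τ i j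
  rcases lt_trichotomy (delgadoM (2 * (r + 1)) τ i j) 19 with hlt | h19 | hgt
  · -- multiplicity m < 19 : m is in M but not in Λ
    have hwΛ : delgadoM (2 * (r + 1)) τ i j ∈ Λ.carrier := by rw [heq]; exact hM.1
    have h7 : 7 ≤ delgadoM (2 * (r + 1)) τ i j := by
      rw [hm]; exact Nat.le_add_left 7 _
    clear hm hg hc heq
    rcases mem_genCarrier hΛ hwΛ with ⟨a, b, d, h⟩ | h
    · have ha : a = 0 := by omega
      have hb : b = 0 := by omega
      have hd : d = 0 := by omega
      omega
    · omega
  · -- m = 19 : only possible for p = 2, τ + j = 12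
    have h19' : r * r + r * τ + j * r + 6 * r + τ + j + 7 = 19 := by rw [← hm]; exact h19
    have hr0 : r = 0 := by
      clear hm hg hc heq h19
      rcases r with _ | r1
      · rfl
      · exfalso
        rcases r1 with _ | r2
        · norm_num at h19'
          omega
        · have h4 : 2 * 2 ≤ (r2 + 1 + 1) * (r2 + 1 + 1) :=
            Nat.mul_le_mul (by omega) (by omega)
          have h5 : (0:ℕ) ≤ (r2 + 1 + 1) * τ := Nat.zero_le _
          have h6 : (0:ℕ) ≤ j * (r2 + 1 + 1) := Nat.zero_le _
          linarith [h19']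
    subst hr0
    rw [h19] at hg hc
    -- now delgadoG + τ = 2τ + j + 9 + 19 i, delgadoC + τ = 2τ + 2j + 14 + 38 i
    have hτj : τ + j = 12 := by clear hg hc heq; omega
    clear h19'
    rcases i with _ | _ | _ | n
    · -- i = 0 : the generator g = 21 belongs to M but not to Λ
      have hg21 : delgadoG (2 * (0 + 1)) τ 0 j = 21 := by omega
      have h21Λ : (21:ℕ) ∈ Λ.carrier := by rw [heq, ← hg21]; exact hM.2.1
      clear hm hg hc heq h19
      rcases mem_genCarrier hΛ h21Λ with ⟨a, b, d, h⟩ | h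
      · have ha : a ≤ 1 := by omega
        have hb : b = 0 := by omega
        have hd : d = 0 := by omega
        interval_cases a <;> omega
      · omega
    · -- i = 1 : g = 40
      have hg40 : delgadoG (2 * (0 + 1)) τ (0 + 1) j = 40 := by omega
      have h40Λ : (40:ℕ) ∈ Λ.carrier := by rw [heq, ← hg40]; exact hM.2.1
      clear hm hg hc heq h19
      rcases mem_genCarrier hΛ h40Λ with ⟨a, b, d, h⟩ | h
      · have ha : a ≤ 2 := by omega
        have hb : b ≤ 1 := by omega
        have hd : d ≤ 1 := by omega
        interval_cases a <;> interval_cases b <;> interval_cases d <;> omega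
      · omega
    · -- i = 2 : g = 59
      have hg59 : delgadoG (2 * (0 + 1)) τ (0 + 1 + 1) j = 59 := by omega
      have h59Λ : (59:ℕ) ∈ Λ.carrier := by rw [heq, ← hg59]; exact hM.2.1
      clear hm hg hc heq h19
      rcases mem_genCarrier hΛ h59Λ with ⟨a, b, d, h⟩ | h
      · have ha : a ≤ 3 := by omega
        have hb : b ≤ 2 := by omega
        have hd : d ≤ 1 := by omega
        interval_cases a <;> interval_cases b <;> interval_cases d <;> omega
      · omega
    · -- i ≥ 3 : 29 ∈ Λ but 29 ∉ M
      have h29M : (29:ℕ) ∈ M.carrier := by rw [← heq]; exact hΛ.2.1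
      have hg78 : 78 ≤ delgadoG (2 * (0 + 1)) τ (n + 1 + 1 + 1) j := by omega
      rcases mem_genCarrier hM h29M with ⟨a, b, d, h⟩ | h
      · have hb : b = 0 := by
          by_contra hb
          have hB := Nat.le_mul_of_pos_left (delgadoG (2 * (0 + 1)) τ (n + 1 + 1 + 1) j)
            (Nat.pos_of_ne_zero hb)
          have h0a : (0:ℕ) ≤ a * delgadoM (2 * (0 + 1)) τ (n + 1 + 1 + 1) j := Nat.zero_le _
          have h0d : (0:ℕ) ≤ d * (delgadoG (2 * (0 + 1)) τ (n + 1 + 1 + 1) j + 1) := Nat.zero_le _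
          linarith
        have hd : d = 0 := by
          by_contra hd
          have hD := Nat.le_mul_of_pos_left (delgadoG (2 * (0 + 1)) τ (n + 1 + 1 + 1) j + 1)
            (Nat.pos_of_ne_zero hd)
          have h0a : (0:ℕ) ≤ a * delgadoM (2 * (0 + 1)) τ (n + 1 + 1 + 1) j := Nat.zero_le _
          have h0b : (0:ℕ) ≤ b * delgadoG (2 * (0 + 1)) τ (n + 1 + 1 + 1) j := Nat.zero_le _
          linarith
        subst hb; subst hd
        rw [h19] at h
        clear hm hg hc heq hτj hg78
        have ha : a ≤ 1 := by omega
        interval_cases a <;> omega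
      · clear hm hg heq
        omega
  · -- m > 19 : 19 ∈ Λ but 19 ∉ M since every generator of M exceeds 19
    have h19M : (19:ℕ) ∈ M.carrier := by rw [← heq]; exact hΛ.1
    have keyg : delgadoG (2 * (r + 1)) τ i j + τ =
        (delgadoM (2 * (r + 1)) τ i j + τ)
          + (r * r + r * τ + j * r + 5 * r + 2 + i * delgadoM (2 * (r + 1)) τ i j) := by
      rw [hg, hm]; ring
    have hGm : delgadoM (2 * (r + 1)) τ i j ≤ delgadoG (2 * (r + 1)) τ i j := by
      refine Nat.le_of_add_le_add_right (b := τ) ?_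
      rw [keyg]; exact Nat.le_add_right _ _
    have keyc : delgadoC (2 * (r + 1)) τ i j + τ =
        (delgadoM (2 * (r + 1)) τ i j + 7 + τ)
          + (2 * (r * r * r) + 2 * (r * r * τ) + 13 * (r * r) + 2 * (j * (r * r))
              + 3 * (r * τ) + 3 * (j * r) + 20 * r + j
              + i * (r + 2) * delgadoM (2 * (r + 1)) τ i j) := by
      rw [hc, hm]; ring
    have hCm : delgadoM (2 * (r + 1)) τ i j + 7 ≤ delgadoC (2 * (r + 1)) τ i j := by
      refine Nat.le_of_add_le_add_right (b := τ) ?_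
      rw [keyc]; exact Nat.le_add_right _ _
    rcases mem_genCarrier hM h19M with ⟨a, b, d, h⟩ | h
    · have ha : a = 0 := by
        by_contra ha
        have hA := Nat.le_mul_of_pos_left (delgadoM (2 * (r + 1)) τ i j)
          (Nat.pos_of_ne_zero ha)
        have h0b : (0:ℕ) ≤ b * delgadoG (2 * (r + 1)) τ i j := Nat.zero_le _
        have h0d : (0:ℕ) ≤ d * (delgadoG (2 * (r + 1)) τ i j + 1) := Nat.zero_le _
        linarith
      have hb : b = 0 := by
        by_contra hb
        have hB := Nat.le_mul_of_pos_left (delgadoG (2 * (r + 1)) τ i j)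
          (Nat.pos_of_ne_zero hb)
        have h0a : (0:ℕ) ≤ a * delgadoM (2 * (r + 1)) τ i j := Nat.zero_le _
        have h0d : (0:ℕ) ≤ d * (delgadoG (2 * (r + 1)) τ i j + 1) := Nat.zero_le _
        linarith
      have hd : d = 0 := by
        by_contra hd
        have hD := Nat.le_mul_of_pos_left (delgadoG (2 * (r + 1)) τ i j + 1)
          (Nat.pos_of_ne_zero hd)
        have h0a : (0:ℕ) ≤ a * delgadoM (2 * (r + 1)) τ i j := Nat.zero_le _
        have h0b : (0:ℕ) ≤ b * delgadoG (2 * (r + 1)) τ i j := Nat.zero_le _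
        linarith
      subst ha; subst hb; subst hd
      clear hm hg hc heq keyg keyc hGm hCm
      omega
    · clear hm hg hc heq keyg keyc
      omega
end
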